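/- arXiv:2509.24158 — 3 statements merged into one kernel-verified Lean document; each statement's English description precedes it below -/
import Mathlib

section
/- Under the setup of the RAY decomposition with operators A_r satisfying A_r ∘ A_{r'} = A_{r'} for r' ⊆ r and A_M = id, the identity ℳ(f) = ∑_{s ⊆ M} λ_s P_s(f) holds for all f; equivalently, the remainder terms sum to zero: ∑_{s ⊆ M} Rem_s(f) = 0. -/
/-!
Expanding `λ_s` and `P_s` turns `∑_{s ⊆ M} λ_s P_s(f)` into a triple sum over `t ∈ Q`, `r ∈ Q`
and `r ⊆ s ⊆ t`. The sign sum `∑_{r ⊆ s ⊆ t} (-1)^{|s|-|r|}` is the Möbius function of the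
Boolean lattice, which vanishes unless `r = t`; so only the diagonal `π_t A_t(f)` survives.
Taking `π` to be the indicator of `M` gives the decomposition `f = ∑_s P_s(f)`, and applying the
linear maps `A_r` to it shows that the remainders sum to zero.
-/

open Finset

namespace Finset

variable {α : Type*} [DecidableEq α]

theorem sum_Icc_neg_one_pow_card_sub {R : Type*} [Ring R] (r t : Finset α) :
    ∑ s ∈ Icc r t, (-1 : R) ^ (#s - #r) = if r = t then 1 else 0 := by
  by_cases hrt : r ⊆ t
  · have hinj : Set.InjOn (r ∪ ·) ((t \ r).powerset : Set (Finset α)) := fun u hu v hv huv => by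
      simp only [coe_powerset, Set.mem_preimage, Set.mem_powerset_iff, coe_subset] at hu hv
      rw [← union_sdiff_cancel_left (disjoint_of_subset_right hu disjoint_sdiff),
        ← union_sdiff_cancel_left (disjoint_of_subset_right hv disjoint_sdiff)]
      exact congrArg (· \ r) huv
    have hsigns := congrArg (Int.cast : ℤ → R) (sum_powerset_neg_one_pow_card (x := t \ r))
    push_cast at hsigns
    rw [Icc_eq_image_powerset hrt, sum_image hinj]
    calc ∑ u ∈ (t \ r).powerset, (-1 : R) ^ (#(r ∪ u) - #r)
        = ∑ u ∈ (t \ r).powerset, (-1 : R) ^ #u := by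
          refine sum_congr rfl fun u hu => ?_
          rw [card_union_of_disjoint (disjoint_of_subset_right (mem_powerset.1 hu) disjoint_sdiff),
            Nat.add_sub_cancel_left]
      _ = if r = t then 1 else 0 := by
          have hempty : t \ r = ∅ ↔ r = t := by
            rw [sdiff_eq_empty_iff_subset]
            exact ⟨subset_antisymm hrt, fun h => h ▸ subset_rfl⟩
          rw [hsigns]
          exact if_congr hempty rfl rfl
  · rw [Icc_eq_empty hrt, sum_empty, if_neg (fun h : r = t => hrt (h ▸ subset_rfl))]

theorem sum_powerset_sum_superset_sum_subset {β : Type*} [AddCommMonoid β]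
    {M : Finset α} {Q : Finset (Finset α)} (hQ : ∀ t ∈ Q, t ⊆ M)
    (F : Finset α → Finset α → Finset α → β) :
    ∑ s ∈ M.powerset, ∑ t ∈ Q with s ⊆ t, ∑ r ∈ Q with r ⊆ s, F s t r
      = ∑ t ∈ Q, ∑ r ∈ Q, ∑ s ∈ Icc r t, F s t r := by
  have hIcc : ∀ t ∈ Q, ∀ r, Icc r t = {s ∈ M.powerset | s ⊆ t ∧ r ⊆ s} := fun t ht r => by
    ext s
    simp only [mem_Icc, mem_filter, mem_powerset]
    exact ⟨fun h => ⟨h.2.trans (hQ t ht), h.2, h.1⟩, fun h => ⟨h.2.2, h.2.1⟩⟩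
  calc _ = ∑ s ∈ M.powerset, ∑ t ∈ Q, ∑ r ∈ Q, if s ⊆ t ∧ r ⊆ s then F s t r else 0 := by
        simp only [sum_filter, ite_and, sum_ite_irrel, sum_const_zero]
    _ = ∑ t ∈ Q, ∑ r ∈ Q, ∑ s ∈ M.powerset, if s ⊆ t ∧ r ⊆ s then F s t r else 0 := by
        rw [sum_comm]; exact sum_congr rfl fun _ _ => sum_comm
    _ = _ := sum_congr rfl fun t ht => sum_congr rfl fun r _ => by rw [hIcc t ht, sum_filter]

variable {R V : Type*} [Ring R] [AddCommGroup V] [Module R V]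

theorem sum_powerset_smul_sum_alternating {M : Finset α} {Q : Finset (Finset α)}
    (hQ : ∀ t ∈ Q, t ⊆ M) (π : Finset α → R) (g : Finset α → V) :
    ∑ s ∈ M.powerset, (∑ t ∈ Q with s ⊆ t, π t) • ∑ r ∈ Q with r ⊆ s, (-1 : R) ^ (#s - #r) • g r
      = ∑ r ∈ Q, π r • g r := by
  simp only [sum_smul]
  simp only [smul_sum, smul_smul]
  rw [sum_powerset_sum_superset_sum_subset hQ]
  calc ∑ t ∈ Q, ∑ r ∈ Q, ∑ s ∈ Icc r t, (π t * (-1 : R) ^ (#s - #r)) • g r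
      = ∑ t ∈ Q, ∑ r ∈ Q, if t = r then π t • g r else 0 := by
        refine sum_congr rfl fun t _ => sum_congr rfl fun r _ => ?_
        rw [← sum_smul, ← mul_sum, sum_Icc_neg_one_pow_card_sub, mul_boole, ite_smul, zero_smul]
        exact if_congr eq_comm rfl rfl
    _ = ∑ r ∈ Q, π r • g r := sum_congr rfl fun t ht => by rw [sum_ite_eq, if_pos ht]

theorem sum_powerset_sum_alternating {M : Finset α} {Q : Finset (Finset α)}
    (hQ : ∀ t ∈ Q, t ⊆ M) (hMQ : M ∈ Q) (g : Finset α → V) :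
    ∑ s ∈ M.powerset, ∑ r ∈ Q with r ⊆ s, (-1 : R) ^ (#s - #r) • g r = g M := by
  have hweight : ∀ s ∈ M.powerset, ∑ t ∈ Q with s ⊆ t, (if t = M then 1 else 0 : R) = 1 :=
    fun s hs => by rw [sum_ite_eq', if_pos (mem_filter.2 ⟨hMQ, mem_powerset.1 hs⟩)]
  calc _ = ∑ s ∈ M.powerset, (∑ t ∈ Q with s ⊆ t, (if t = M then 1 else 0 : R)) •
          ∑ r ∈ Q with r ⊆ s, (-1 : R) ^ (#s - #r) • g r :=
        sum_congr rfl fun s hs => by rw [hweight s hs, one_smul]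
    _ = g M := by
        rw [sum_powerset_smul_sum_alternating hQ]
        simp only [ite_smul, one_smul, zero_smul, sum_ite_eq', if_pos hMQ]

end Finset

theorem ray_remainders_sum_to_zero_general {α : Type*} [DecidableEq α] {V : Type*}
    [AddCommGroup V] [Module ℝ V]
    (M : Finset α) (Q : Finset (Finset α)) (hQM : M ∈ Q)
    (hQsub : ∀ r ∈ Q, r ⊆ M)
    (A : Finset α → V →ₗ[ℝ] V) (hAM : A M = LinearMap.id)
    (π : Finset α → ℝ)
    (lam : Finset α → ℝ)
    (hlam : ∀ s, lam s = ∑ t ∈ Q.filter (fun t => s ⊆ t), π t)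
    (P : Finset α → V → V)
    (hP : ∀ s f, P s f = ∑ r ∈ Q.filter (fun r => r ⊆ s),
      ((-1 : ℝ) ^ (s.card - r.card)) • A r f)
    (Rem : Finset α → V → V)
    (hRem : ∀ s f, Rem s f = (∑ r ∈ Q, π r • A r (P s f)) - lam s • P s f) :
    ∀ f : V,
      (∑ r ∈ Q, π r • A r f = ∑ s ∈ M.powerset, lam s • P s f) ∧
      (∑ s ∈ M.powerset, Rem s f = 0) := by
  intro f
  have hmean : ∑ r ∈ Q, π r • A r f = ∑ s ∈ M.powerset, lam s • P s f := by
    simp only [hlam, hP]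
    exact (sum_powerset_smul_sum_alternating hQsub π (A · f)).symm
  have hdecomp : ∑ s ∈ M.powerset, P s f = f := by
    simp only [hP]
    rw [sum_powerset_sum_alternating hQsub hQM (A · f), hAM, LinearMap.id_apply]
  refine ⟨hmean, ?_⟩
  calc ∑ s ∈ M.powerset, Rem s f
      = ∑ r ∈ Q, π r • A r (∑ s ∈ M.powerset, P s f) - ∑ s ∈ M.powerset, lam s • P s f := by
        simp only [hRem, sum_sub_distrib, map_sum, smul_sum]
        rw [sum_comm]
    _ = 0 := by rw [hdecomp, hmean, sub_self]

/-- The RAY remainder terms sum to zero: `ℳ(f) = ∑_{s ⊆ M} λ_s P_s(f)`, i.e.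
`∑_{s ⊆ M} Rem_s(f) = 0`. -/
theorem ray_remainders_sum_to_zero {α : Type*} [DecidableEq α] {V : Type*}
    [AddCommGroup V] [Module ℝ V]
    (M : Finset α) (Q : Finset (Finset α)) (hQM : M ∈ Q)
    (hQsub : ∀ r ∈ Q, r ⊆ M)
    (A : Finset α → V →ₗ[ℝ] V) (hAM : A M = LinearMap.id)
    (htower : ∀ r r' : Finset α, r' ⊆ r → (A r).comp (A r') = A r')
    (π : Finset α → ℝ)
    (lam : Finset α → ℝ)
    (hlam : ∀ s, lam s = ∑ t ∈ Q.filter (fun t => s ⊆ t), π t)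
    (P : Finset α → V → V)
    (hP : ∀ s f, P s f = ∑ r ∈ Q.filter (fun r => r ⊆ s),
      ((-1 : ℝ) ^ (s.card - r.card)) • A r f)
    (Rem : Finset α → V → V)
    (hRem : ∀ s f, Rem s f = (∑ r ∈ Q, π r • A r (P s f)) - lam s • P s f) :
    ∀ f : V,
      (∑ r ∈ Q, π r • A r f = ∑ s ∈ M.powerset, lam s • P s f) ∧
      (∑ s ∈ M.powerset, Rem s f = 0) :=
  ray_remainders_sum_to_zero_general M Q hQM hQsub A hAM π lam hlam P hP Rem hRem
end

section
/- Let Z be an integrable random variable (or vector) with E[ψ] = 0, and let R be a random pattern independent of Z taking values in a finite set Q with P(R = r) = π_r > 0. Then the prediction-powered-type estimating function Ψ = (𝟙(R = M)/π_M)·ψ + ∑_{r ≠ M} α_r ω_r 𝓕_r, where ω_r is any function of R with E[ω_r] = 0, 𝓕_r is any integrable function of Z, and α_r ∈ ℝ, satisfies E[Ψ] = 0. -/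
open MeasureTheory Finset

/-! Under the product measure every summand of `Ψ` is a separable product `g(R) f(Z)`, whose
mean factorises as `E[g(R)] E[f(Z)]`; one of the two factors has mean zero in each summand. -/

section SeparableProduct

variable {Ω ι 𝕜 : Type*} [MeasurableSpace Ω] [MeasurableSpace ι] [RCLike 𝕜]
  {μ : Measure Ω} {ν : Measure ι}

theorem MeasureTheory.Integrable.snd_mul_fst {g : ι → 𝕜} {f : Ω → 𝕜} (hg : Integrable g ν)
    (hf : Integrable f μ) : Integrable (fun p : Ω × ι => g p.2 * f p.1) (μ.prod ν) := by
  simpa only [mul_comm] using hf.mul_prod hg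

theorem integral_prod_snd_mul_fst [SFinite μ] [SFinite ν] (g : ι → 𝕜) (f : Ω → 𝕜) :
    ∫ p : Ω × ι, g p.2 * f p.1 ∂μ.prod ν = (∫ t, g t ∂ν) * ∫ z, f z ∂μ := by
  simp_rw [mul_comm (g _), integral_prod_mul, mul_comm]

end SeparableProduct

theorem ibm_estimating_function_unbiased_general
    {Ω : Type*} [MeasurableSpace Ω] (μ : Measure Ω) [IsProbabilityMeasure μ]
    {ι : Type*} [Fintype ι] [DecidableEq ι] [MeasurableSpace ι]
    [MeasurableSingletonClass ι]
    (ν : Measure ι) [IsProbabilityMeasure ν]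
    (Q : Finset ι) (M : ι)
    (π : ι → ℝ)
    (ψ : Ω → ℝ) (hψint : Integrable ψ μ) (hψ : ∫ z, ψ z ∂μ = 0)
    (F : ι → Ω → ℝ) (hF : ∀ r ∈ Q.erase M, Integrable (F r) μ)
    (w : ι → ι → ℝ) (hw : ∀ r ∈ Q.erase M, ∫ t, w r t ∂ν = 0)
    (α : ι → ℝ) :
    ∫ p : Ω × ι,
      ((if p.2 = M then 1 / π M else 0) * ψ p.1 +
        ∑ r ∈ Q.erase M, α r * w r p.2 * F r p.1) ∂(μ.prod ν) = 0 := by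
  have hweight : Integrable (fun t : ι => if t = M then 1 / π M else 0) ν := .of_finite
  have hterm : ∀ r ∈ Q.erase M,
      Integrable (fun p : Ω × ι => α r * w r p.2 * F r p.1) (μ.prod ν) := fun r hr =>
    Integrable.snd_mul_fst (g := fun t => α r * w r t) .of_finite (hF r hr)
  rw [integral_add (hweight.snd_mul_fst hψint) (integrable_finsetSum _ hterm),
    integral_finsetSum _ hterm,
    integral_prod_snd_mul_fst (fun t => if t = M then 1 / π M else 0), hψ, mul_zero, zero_add]
  refine sum_eq_zero fun r hr => ?_
  rw [integral_prod_snd_mul_fst (fun t => α r * w r t), integral_const_mul, hw r hr, mul_zero,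
    zero_mul]

/-- Validity of the IBM estimating function: with the pattern `R` independent of the
data (modeled by a product space), `E[ψ] = 0`, and pattern weights `ω_r` with mean
zero, the estimating function
`Ψ = 𝟙(R = M)/π_M · ψ + ∑_{r ≠ M} α_r ω_r(R) 𝓕_r` has mean zero for any `α` and any
integrable `𝓕_r`. -/
theorem ibm_estimating_function_unbiased
    {Ω : Type*} [MeasurableSpace Ω] (μ : Measure Ω) [IsProbabilityMeasure μ]
    {ι : Type*} [Fintype ι] [DecidableEq ι] [MeasurableSpace ι]
    [MeasurableSingletonClass ι]
    (ν : Measure ι) [IsProbabilityMeasure ν]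
    (Q : Finset ι) (M : ι) (hM : M ∈ Q)
    (hν : ∀ t, t ∉ Q → ν {t} = 0)
    (π : ι → ℝ) (hπ : ∀ t ∈ Q, π t = (ν {t}).toReal) (hpos : ∀ t ∈ Q, 0 < π t)
    (ψ : Ω → ℝ) (hψint : Integrable ψ μ) (hψ : ∫ z, ψ z ∂μ = 0)
    (F : ι → Ω → ℝ) (hF : ∀ r ∈ Q.erase M, Integrable (F r) μ)
    (w : ι → ι → ℝ) (hw : ∀ r ∈ Q.erase M, ∫ t, w r t ∂ν = 0)
    (α : ι → ℝ) :
    ∫ p : Ω × ι,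
      ((if p.2 = M then 1 / π M else 0) * ψ p.1 +
        ∑ r ∈ Q.erase M, α r * w r p.2 * F r p.1) ∂(μ.prod ν) = 0 :=
  ibm_estimating_function_unbiased_general μ ν Q M π ψ hψint hψ F hF w hw α
end

section
/- Let ψ be an integrable ℝᵈ-valued random variable with E[ψ] = 0, independent random pattern R with values in finite Q, and for each r ∈ Q, r ≠ M let 𝓕_r be integrable and α_{r,s} ∈ ℝ (for s ∈ Q, s ⊇ r) satisfy ∑_{s ⊇ r} α_{r,s} = 0. Then the adaptive estimating function Ψ = (𝟙(R=M)/π_M)ψ + ∑_{r≠M} (∑_{s⊇r} (𝟙(R=s)/π_s) α_{r,s}) 𝓕_r satisfies E[Ψ] = 0. -/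
/-! Since the pattern `R` is independent of the data, every term of `Ψ` is a product
`g(R) • h(data)` whose mean factors as `E[g(R)] • E[h]`. The inverse-probability weight
`𝟙(R = s) / π_s` has mean one, so the first term contributes `E[ψ] = 0` and the term of
`𝓕_r` contributes `(∑_{s ⊇ r} α_{r,s}) • E[𝓕_r] = 0`. -/

open MeasureTheory Finset

section ProdSmul

variable {X Y E : Type*} [MeasurableSpace X] [MeasurableSpace Y]
  [NormedAddCommGroup E] [NormedSpace ℝ E] {μ : Measure X} {ν : Measure Y} [SFinite μ] [SFinite ν]

theorem MeasureTheory.Integrable.smul_prod_swap {g : Y → ℝ} {h : X → E} (hg : Integrable g ν)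
    (hh : Integrable h μ) : Integrable (fun p : X × Y => g p.2 • h p.1) (μ.prod ν) :=
  (hg.smul_prod hh).swap

theorem integral_prod_smul_swap (g : Y → ℝ) (h : X → E) :
    ∫ p : X × Y, g p.2 • h p.1 ∂(μ.prod ν) = (∫ y, g y ∂ν) • ∫ x, h x ∂μ := by
  rw [← integral_prod_swap]
  exact integral_prod_smul g h

end ProdSmul

section InverseProbabilityWeight

variable {α : Type*} [DecidableEq α] [MeasurableSpace α] [MeasurableSingletonClass α] {ν : Measure α}

theorem integrable_ite_eq [IsFiniteMeasure ν] (s : α) (c : ℝ) :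
    Integrable (fun t => if t = s then c else 0) ν := by
  have hind : (fun t => if t = s then c else 0) = Set.indicator {s} fun _ => c := by
    ext t
    simp only [Set.indicator_apply, Set.mem_singleton_iff]
  rw [hind]
  exact (integrable_const c).indicator (measurableSet_singleton s)

theorem integral_ite_eq (s : α) (c : ℝ) : ∫ t, (if t = s then c else 0) ∂ν = ν.real {s} * c := by
  simpa only [Set.indicator_apply, Set.mem_singleton_iff, smul_eq_mul] using
    integral_indicator_const (μ := ν) c (measurableSet_singleton s)

theorem integral_ite_eq_one_div_measureReal {s : α} (hs : ν.real {s} ≠ 0) :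
    ∫ t, (if t = s then 1 / ν.real {s} else 0) ∂ν = 1 := by
  rw [integral_ite_eq]
  field_simp

end InverseProbabilityWeight

theorem ibm_adaptive_unbiased_general
    {Ω : Type*} [MeasurableSpace Ω] (μ : Measure Ω) [IsProbabilityMeasure μ]
    {β : Type*} [DecidableEq β] [MeasurableSpace (Finset β)]
    [MeasurableSingletonClass (Finset β)]
    (ν : Measure (Finset β)) [IsProbabilityMeasure ν]
    (Q : Finset (Finset β)) (M : Finset β)
    (π : Finset β → ℝ) (hπ : ∀ t ∈ Q, π t = (ν {t}).toReal)
    (hpos : ∀ t ∈ Q, 0 < π t)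
    {d : ℕ} (ψ : Ω → EuclideanSpace ℝ (Fin d))
    (hψint : Integrable ψ μ) (hψ : ∫ z, ψ z ∂μ = 0)
    (F : Finset β → Ω → EuclideanSpace ℝ (Fin d))
    (hF : ∀ r ∈ Q.erase M, Integrable (F r) μ)
    (a : Finset β → Finset β → ℝ)
    (ha : ∀ r ∈ Q.erase M, ∑ s ∈ Q.filter (fun s => r ⊆ s), a r s = 0) :
    ∫ p : Ω × Finset β,
      ((if p.2 = M then 1 / π M else 0) • ψ p.1 +
        ∑ r ∈ Q.erase M,
          (∑ s ∈ Q.filter (fun s => r ⊆ s),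
            (if p.2 = s then 1 / π s else 0) * a r s) • F r p.1) ∂(μ.prod ν)
      = 0 := by
  have hweight : ∀ s ∈ Q, ∀ c, ∫ t, (if t = s then 1 / π s else 0) * c ∂ν = c := by
    intro s hs c
    have hν : ν.real {s} ≠ 0 := (hπ s hs ▸ hpos s hs).ne'
    rw [integral_mul_const, hπ s hs, ← measureReal_def, integral_ite_eq_one_div_measureReal hν,
      one_mul]
  have hg : ∀ r, Integrable
      (fun t => ∑ s ∈ Q.filter (fun s => r ⊆ s), (if t = s then 1 / π s else 0) * a r s) ν :=
    fun r => integrable_finsetSum _ fun s _ => (integrable_ite_eq s _).mul_const _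
  have hcoef : ∀ r ∈ Q.erase M,
      ∫ t, ∑ s ∈ Q.filter (fun s => r ⊆ s), (if t = s then 1 / π s else 0) * a r s ∂ν = 0 := by
    intro r hr
    rw [integral_finsetSum _ fun s _ => (integrable_ite_eq s _).mul_const _,
      sum_congr rfl fun s hs => hweight s (mem_filter.1 hs).1 _]
    exact ha r hr
  have hterms : ∀ r ∈ Q.erase M, Integrable (fun p : Ω × Finset β =>
      (∑ s ∈ Q.filter (fun s => r ⊆ s), (if p.2 = s then 1 / π s else 0) * a r s) • F r p.1)
      (μ.prod ν) :=
    fun r hr => (hg r).smul_prod_swap (hF r hr)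
  rw [integral_add ((integrable_ite_eq M _).smul_prod_swap hψint) (integrable_finsetSum _ hterms),
    integral_finsetSum _ hterms, integral_prod_smul_swap (fun t => if t = M then 1 / π M else 0),
    hψ, smul_zero, zero_add]
  exact sum_eq_zero fun r hr =>
    (integral_prod_smul_swap _ (F r)).trans (by rw [hcoef r hr, zero_smul])

/-- Unbiasedness of the IBM(Adaptive) estimating function: if the coefficients
satisfy `∑_{s ∈ Q, s ⊇ r} α_{r,s} = 0` then
`Ψ = 𝟙(R=M)/π_M · ψ + ∑_{r≠M} (∑_{s⊇r} 𝟙(R=s)/π_s · α_{r,s}) 𝓕_r`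
has mean zero, the pattern `R` being independent of the data (product space). -/
theorem ibm_adaptive_unbiased
    {Ω : Type*} [MeasurableSpace Ω] (μ : Measure Ω) [IsProbabilityMeasure μ]
    {β : Type*} [DecidableEq β] [MeasurableSpace (Finset β)]
    [MeasurableSingletonClass (Finset β)]
    (ν : Measure (Finset β)) [IsProbabilityMeasure ν]
    (Q : Finset (Finset β)) (M : Finset β) (hM : M ∈ Q)
    (hQsub : ∀ t ∈ Q, t ⊆ M) (hν : ∀ t, t ∉ Q → ν {t} = 0)
    (π : Finset β → ℝ) (hπ : ∀ t ∈ Q, π t = (ν {t}).toReal)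
    (hpos : ∀ t ∈ Q, 0 < π t)
    {d : ℕ} (ψ : Ω → EuclideanSpace ℝ (Fin d))
    (hψint : Integrable ψ μ) (hψ : ∫ z, ψ z ∂μ = 0)
    (F : Finset β → Ω → EuclideanSpace ℝ (Fin d))
    (hF : ∀ r ∈ Q.erase M, Integrable (F r) μ)
    (a : Finset β → Finset β → ℝ)
    (ha : ∀ r ∈ Q.erase M, ∑ s ∈ Q.filter (fun s => r ⊆ s), a r s = 0) :
    ∫ p : Ω × Finset β,
      ((if p.2 = M then 1 / π M else 0) • ψ p.1 +
        ∑ r ∈ Q.erase M,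
          (∑ s ∈ Q.filter (fun s => r ⊆ s),
            (if p.2 = s then 1 / π s else 0) * a r s) • F r p.1) ∂(μ.prod ν)
      = 0 :=
  ibm_adaptive_unbiased_general μ ν Q M π hπ hpos ψ hψint hψ F hF a ha
end
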